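/- arXiv:2204.11943 — 6 statements merged into one kernel-verified Lean document; each statement's English description precedes it below -/
import Mathlib

section
/- Let k ≥ 2 be an integer with k ∉ {2,3,4,6}, and for an integer a define φ_k(a) = Σ_{1 ≤ n < k, gcd(n,k)=1} ((n - a) mod k). Then φ_k(a) ≥ k for every integer a. -/
/-!
Write `s = (-a) mod k` and `C(s)` for the number of totatives `n ≤ s`. Each term `(n + s) mod k`
equals `n + s` minus `k` exactly when `n ≥ k - s`, and the involution `n ↦ k - n` of the totatives
gives `Σ n = k φ(k) / 2` and turns that count into `C(s)`; so `φ_k(a) = k φ(k) / 2 + φ(k) s - k C(s)`.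
If `s ≥ k/2`, the totative `k - 1` bounds `C(s)` by `φ(k) - 1` unless `s = k - 1`. If `s < k/2`,
then `C(s) ≤ φ(k)/2`, and this suffices unless `φ(k) s < k`; then `s` lies below a totative
`c ∈ [k/4, k/2)`, which exists because `k ∉ {2, 3, 4, 6}` and lowers the bound to `φ(k)/2 - 1`.
Together with `1` it also shows `φ(k) ≥ 4`, which all the cases need.
-/

open Finset

noncomputable def totatives (k : ℤ) : Finset ℤ := {n ∈ Ioo 0 k | Int.gcd n k = 1}

section Totatives

variable {k : ℤ}

lemma mem_totatives {n : ℤ} : n ∈ totatives k ↔ (0 < n ∧ n < k) ∧ Int.gcd n k = 1 := by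
  simp [totatives]

lemma one_mem_totatives (hk : 1 < k) : 1 ∈ totatives k :=
  mem_totatives.2 ⟨⟨one_pos, hk⟩, Int.gcd_one_left k⟩

lemma sub_mem_totatives {n : ℤ} (hn : n ∈ totatives k) : k - n ∈ totatives k := by
  obtain ⟨⟨hn0, hnk⟩, hgcd⟩ := mem_totatives.1 hn
  exact mem_totatives.2 ⟨⟨by omega, by omega⟩, by rwa [Int.gcd_self_sub_left]⟩

lemma two_mul_ne_of_mem_totatives (hk : 2 < k) {n : ℤ} (hn : n ∈ totatives k) : 2 * n ≠ k := by
  rintro rfl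
  obtain ⟨⟨hn0, -⟩, hgcd⟩ := mem_totatives.1 hn
  rw [Int.gcd_mul_left_right] at hgcd
  omega

lemma sum_totatives_comp_sub {M : Type*} [AddCommMonoid M] (f : ℤ → M) :
    ∑ n ∈ totatives k, f (k - n) = ∑ n ∈ totatives k, f n :=
  sum_nbij' (k - ·) (k - ·) (fun _ => sub_mem_totatives) (fun _ => sub_mem_totatives)
    (by simp) (by simp) (by simp)

lemma card_filter_totatives_comp_sub (p : ℤ → Prop) [DecidablePred p] :
    #{n ∈ totatives k | p (k - n)} = #{n ∈ totatives k | p n} := by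
  simpa only [card_filter] using sum_totatives_comp_sub (k := k) (fun n => if p n then 1 else 0)

lemma two_mul_sum_totatives : 2 * ∑ n ∈ totatives k, n = k * #(totatives k) := by
  have h := sum_totatives_comp_sub (k := k) (fun n => n)
  rw [sum_sub_distrib, sum_const, nsmul_eq_mul] at h
  linarith

lemma two_mul_card_filter_two_mul_lt (hk : 2 < k) :
    2 * #{n ∈ totatives k | 2 * n < k} = #(totatives k) := by
  have hrefl := card_filter_totatives_comp_sub (k := k) (fun n => 2 * n < k)
  rw [filter_congr (q := fun n => ¬ 2 * n < k)
    (fun n hn => by have := two_mul_ne_of_mem_totatives hk hn; omega)] at hrefl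
  have := card_filter_add_card_filter_not (s := totatives k) (p := fun n => 2 * n < k)
  omega

lemma exists_mem_totatives_two_mul_lt_le_four_mul (hk : 5 ≤ k) (h6 : k ≠ 6) :
    ∃ c ∈ totatives k, 2 * c < k ∧ k ≤ 4 * c := by
  suffices ∃ c e, IsCoprime c e ∧ k = e + c * 2 ∧ 0 < e ∧ e ≤ 4 ∧ 2 ≤ c by
    obtain ⟨c, e, hce, rfl, he0, he4, hc2⟩ := this
    refine ⟨c, mem_totatives.2 ⟨⟨by omega, by omega⟩, ?_⟩, by omega, by omega⟩
    exact Int.isCoprime_iff_gcd_eq_one.1 (hce.add_mul_left_right 2)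
  have odd_coprime {c : ℤ} (hc : c % 2 = 1) : IsCoprime c 2 :=
    Int.isCoprime_two_right.2 (Int.odd_iff.2 hc)
  rcases (by omega : k % 2 = 1 ∨ k % 4 = 0 ∨ (k % 4 = 2 ∧ 10 ≤ k)) with hk2 | hk4 | ⟨hk4, hk10⟩
  · exact ⟨k / 2, 1, isCoprime_one_right, by omega, by omega, by omega, by omega⟩
  · exact ⟨k / 2 - 1, 2, odd_coprime (by omega), by omega, by omega, by omega, by omega⟩
  · exact ⟨k / 2 - 2, 2 ^ 2, (odd_coprime (by omega)).pow_right, by omega, by omega, by omega,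
      by omega⟩

lemma four_le_card_totatives (hk : 5 ≤ k) (h6 : k ≠ 6) : 4 ≤ #(totatives k) := by
  obtain ⟨c, hc, hc2, hc4⟩ := exists_mem_totatives_two_mul_lt_le_four_mul hk h6
  have hsub : {1, c} ⊆ {n ∈ totatives k | 2 * n < k} := by
    simp only [insert_subset_iff, singleton_subset_iff, mem_filter]
    exact ⟨⟨one_mem_totatives (by omega), by omega⟩, hc, hc2⟩
  have hpair : #{1, c} = 2 := card_pair (by omega)
  have := card_le_card hsub
  have := two_mul_card_filter_two_mul_lt (k := k) (by omega)
  omega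

lemma sub_emod_eq_add_emod_neg_sub {n : ℤ} (hk : 0 < k) (a : ℤ) (hn0 : 0 ≤ n) (hnk : n < k) :
    (n - a) % k = n + (-a) % k - k * if k - (-a) % k ≤ n then 1 else 0 := by
  have hs0 := Int.emod_nonneg (-a) hk.ne'
  have hsk := Int.emod_lt_of_pos (-a) hk
  rw [sub_eq_add_neg, ← Int.add_emod_emod]
  split_ifs with h
  · rw [show n + (-a) % k = n + (-a) % k - k + k * 1 by ring, Int.add_mul_emod_self_left,
      Int.emod_eq_of_lt (by omega) (by omega)]
    ring
  · rw [Int.emod_eq_of_lt (by omega) (by omega)]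
    ring

lemma sum_sub_emod_totatives (hk : 0 < k) (a : ℤ) :
    ∑ n ∈ totatives k, (n - a) % k = ∑ n ∈ totatives k, n + #(totatives k) * ((-a) % k)
      - k * #{n ∈ totatives k | n ≤ (-a) % k} := by
  have hterm (n : ℤ) (hn : n ∈ totatives k) := by
    obtain ⟨⟨hn0, hnk⟩, -⟩ := mem_totatives.1 hn
    exact sub_emod_eq_add_emod_neg_sub hk a hn0.le hnk
  have hcount : #{n ∈ totatives k | n ≤ (-a) % k} = #{n ∈ totatives k | k - (-a) % k ≤ n} := by
    rw [← card_filter_totatives_comp_sub]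
    exact congrArg card (filter_congr fun n _ => by omega)
  rw [sum_congr rfl hterm, sum_sub_distrib, sum_add_distrib, ← mul_sum, sum_const, nsmul_eq_mul,
    hcount, natCast_card_filter]

lemma two_mul_mul_card_filter_le_add_one_le {s : ℤ} (hk : 5 ≤ k) (h6 : k ≠ 6) (hs0 : 0 ≤ s)
    (hsk : s < k) :
    2 * k * (#{n ∈ totatives k | n ≤ s} + 1) ≤ k * #(totatives k) + 2 * #(totatives k) * s := by
  set φ := #(totatives k)
  set C := #{n ∈ totatives k | n ≤ s}
  have hφ : (4 : ℤ) ≤ φ := by exact_mod_cast four_le_card_totatives hk h6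
  rcases lt_or_ge (2 * s) k with hs2 | hs2
  · set G := #{n ∈ totatives k | 2 * n < k}
    have hG : 2 * (G : ℤ) = φ := by exact_mod_cast two_mul_card_filter_two_mul_lt (by omega)
    have hCG : C ≤ G := card_le_card (monotone_filter_right _ fun n h => by omega)
    by_cases hsφ : k ≤ φ * s
    · have : (C : ℤ) ≤ G := by exact_mod_cast hCG
      nlinarith
    · obtain ⟨c, hc, hc2, hc4⟩ := exists_mem_totatives_two_mul_lt_le_four_mul hk h6
      have hsc : s < c := by
        by_contra! hcs
        nlinarith
      have hCG' : C < G := by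
        refine card_lt_card ((ssubset_iff_of_subset (monotone_filter_right _ fun n h => by omega)).2
          ⟨c, mem_filter.2 ⟨hc, hc2⟩, fun h => ?_⟩)
        have := (mem_filter.1 h).2
        omega
      have : (C : ℤ) + 1 ≤ G := by exact_mod_cast hCG'
      nlinarith
  · rcases eq_or_lt_of_le (show s ≤ k - 1 by omega) with rfl | hs1
    · have : (C : ℤ) ≤ φ := by exact_mod_cast card_filter_le _ _
      nlinarith
    · have hCφ : C < φ := by
        refine card_lt_card ((ssubset_iff_of_subset (filter_subset _ _)).2
          ⟨k - 1, sub_mem_totatives (one_mem_totatives (by omega)), fun h => ?_⟩)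
        have := (mem_filter.1 h).2
        omega
      have : (C : ℤ) + 1 ≤ φ := by exact_mod_cast hCφ
      nlinarith

end Totatives

/-- For an integer `k ≥ 2` with `k ∉ {2,3,4,6}` and any integer `a`,
`φ_k(a) = Σ_{1 ≤ n < k, gcd(n,k) = 1} ((n - a) mod k) ≥ k`, where `x mod k` denotes the
representative of `x` modulo `k` lying in `{0, …, k-1}` (which is `x % k` on `ℤ` for `k > 0`). -/
theorem stmt0 (k : ℤ) (hk : 2 ≤ k) (h2 : k ≠ 2) (h3 : k ≠ 3) (h4 : k ≠ 4) (h6 : k ≠ 6)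
    (a : ℤ) :
    k ≤ ∑ n ∈ (Finset.Ioo (0 : ℤ) k).filter (fun n => Int.gcd n k = 1), (n - a) % k := by
  have hk5 : 5 ≤ k := by omega
  change k ≤ ∑ n ∈ totatives k, (n - a) % k
  rw [sum_sub_emod_totatives (by omega)]
  have := two_mul_sum_totatives (k := k)
  have := two_mul_mul_card_filter_le_add_one_le hk5 h6 (Int.emod_nonneg (-a) (by omega))
    (Int.emod_lt_of_pos (-a) (by omega))
  linarith
end

section
/- For integers k' ≥ 2 and ℓ ≥ 1 with k = k'ℓ, and any integer a with 0 ≤ a < k, one has (1/k) · Σ_{i=1}^{k'-1} ((ℓi - a) mod k) ≥ (k'-2)(k'-1)/(2k'). -/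
/-!
Write `-a = ℓ q + r` with `0 ≤ r < ℓ`. Then `ℓ i - a = ℓ (i + q) + r`, so
`(ℓ i - a) mod k'ℓ = ℓ ((i + q) mod k') + r ≥ ℓ ((i + q) mod k')`. As `i` runs over
`0, …, k' - 1`, so does `(i + q) mod k'`, giving the sum `k'(k' - 1)/2`; the omitted term `i = 0`
is at most `k' - 1`, which leaves at least `(k' - 1)(k' - 2)/2`.
-/

open Finset

lemma mul_add_emod_mul_of_lt {ℓ r n : ℤ} (x : ℤ) (hn : 0 < n) (hr : 0 ≤ r) (hrℓ : r < ℓ) :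
    (ℓ * x + r) % (n * ℓ) = ℓ * (x % n) + r := by
  have hmod_nonneg := Int.emod_nonneg x hn.ne'
  have hmod_lt := Int.emod_lt_of_pos x hn
  have hsplit : ℓ * x + r = ℓ * (x % n) + r + n * ℓ * (x / n) := by
    linear_combination ℓ * (Int.emod_add_mul_ediv x n).symm
  rw [hsplit, Int.add_mul_emod_self_left]
  exact Int.emod_eq_of_lt (by nlinarith) (by nlinarith)

lemma sum_Ico_add_emod {n : ℤ} (hn : 0 < n) (c : ℤ) :
    ∑ i ∈ Ico 0 n, (i + c) % n = ∑ i ∈ Ico 0 n, i := by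
  have hmem : ∀ x, x % n ∈ Ico 0 n := fun x =>
    mem_Ico.2 ⟨Int.emod_nonneg x hn.ne', Int.emod_lt_of_pos x hn⟩
  have hcancel : ∀ x y, x ∈ Ico 0 n → ((x + y) % n + -y) % n = x := fun x y hx => by
    obtain ⟨hx0, hxn⟩ := mem_Ico.1 hx
    rw [Int.emod_add_emod, add_neg_cancel_right, Int.emod_eq_of_lt hx0 hxn]
  refine sum_nbij' (fun i => (i + c) % n) (fun j => (j + -c) % n) (fun i _ => hmem _)
    (fun j _ => hmem _) (fun i hi => hcancel i c hi) (fun j hj => ?_) (fun _ _ => rfl)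
  simpa using hcancel j (-c) hj

lemma two_mul_sum_Ico_zero {n : ℤ} (hn : 0 ≤ n) : 2 * ∑ i ∈ Ico 0 n, i = n * (n - 1) := by
  induction n, hn using Int.leInduction with
  | base => simp
  | succ n hn ih =>
    rw [← insert_Ico_right_eq_Ico_add_one hn, sum_insert right_notMem_Ico]
    linear_combination ih

lemma sub_one_mul_sub_two_le_two_mul_sum_Ioo_add_emod {n : ℤ} (hn : 0 < n) (c : ℤ) :
    (n - 1) * (n - 2) ≤ 2 * ∑ i ∈ Ioo 0 n, (i + c) % n := by
  have hsum := two_mul_sum_Ico_zero hn.le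
  rw [← sum_Ico_add_emod hn c, ← Ioo_insert_left hn, sum_insert left_notMem_Ioo] at hsum
  linarith [Int.emod_lt_of_pos (0 + c) hn]

lemma mul_sub_one_mul_sub_two_le_two_mul_sum_Ioo_emod {n ℓ : ℤ} (hn : 0 < n) (hℓ : 0 < ℓ)
    (a : ℤ) : ℓ * ((n - 1) * (n - 2)) ≤ 2 * ∑ i ∈ Ioo 0 n, (ℓ * i - a) % (n * ℓ) := by
  have hr0 : 0 ≤ -a % ℓ := Int.emod_nonneg _ hℓ.ne'
  have hterm : ∀ i, ℓ * ((i + -a / ℓ) % n) ≤ (ℓ * i - a) % (n * ℓ) := fun i => by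
    have hsplit : ℓ * i - a = ℓ * (i + -a / ℓ) + -a % ℓ := by
      linear_combination (Int.mul_ediv_add_emod (-a) ℓ).symm
    rw [hsplit, mul_add_emod_mul_of_lt _ hn hr0 (Int.emod_lt_of_pos _ hℓ)]
    linarith
  calc ℓ * ((n - 1) * (n - 2)) ≤ ℓ * (2 * ∑ i ∈ Ioo 0 n, (i + -a / ℓ) % n) :=
        mul_le_mul_of_nonneg_left (sub_one_mul_sub_two_le_two_mul_sum_Ioo_add_emod hn _) hℓ.le
    _ = 2 * ∑ i ∈ Ioo 0 n, ℓ * ((i + -a / ℓ) % n) := by rw [mul_left_comm, mul_sum]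
    _ ≤ 2 * ∑ i ∈ Ioo 0 n, (ℓ * i - a) % (n * ℓ) := by gcongr with i; exact hterm i

theorem stmt1_general (k' ℓ a : ℤ) (hk' : 2 ≤ k') (hℓ : 1 ≤ ℓ) :
    ((k' - 2) * (k' - 1) : ℚ) / (2 * (k' : ℚ)) ≤
      (1 / ((k' * ℓ : ℤ) : ℚ)) *
        ∑ i ∈ Finset.Ioo (0 : ℤ) k', (((ℓ * i - a) % (k' * ℓ) : ℤ) : ℚ) := by
  have hk'q : (0 : ℚ) < k' := by exact_mod_cast (by omega : (0 : ℤ) < k')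
  have hℓq : (0 : ℚ) < ℓ := by exact_mod_cast (by omega : (0 : ℤ) < ℓ)
  have key : (ℓ : ℚ) * ((k' - 1) * (k' - 2)) ≤
      2 * ((∑ i ∈ Ioo 0 k', (ℓ * i - a) % (k' * ℓ) : ℤ) : ℚ) := by
    exact_mod_cast mul_sub_one_mul_sub_two_le_two_mul_sum_Ioo_emod (by omega) (by omega) a
  rw [← Int.cast_sum, one_div_mul_eq_div, Int.cast_mul,
    div_le_div_iff₀ (by positivity) (by positivity)]
  nlinarith

/-- For integers `k' ≥ 2` and `ℓ ≥ 1` with `k = k'·ℓ`, and any integer `a`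
with `0 ≤ a < k`, one has `(1/k) · Σ_{i=1}^{k'-1} ((ℓ·i - a) mod k) ≥ (k'-2)(k'-1)/(2k')`,
where `x mod k` is the representative in `{0, …, k-1}`. -/
theorem stmt1 (k' ℓ a : ℤ) (hk' : 2 ≤ k') (hℓ : 1 ≤ ℓ) (ha : 0 ≤ a) (ha' : a < k' * ℓ) :
    ((k' - 2) * (k' - 1) : ℚ) / (2 * (k' : ℚ)) ≤
      (1 / ((k' * ℓ : ℤ) : ℚ)) *
        ∑ i ∈ Finset.Ioo (0 : ℤ) k', (((ℓ * i - a) % (k' * ℓ) : ℤ) : ℚ) :=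
  stmt1_general k' ℓ a hk' hℓ
end

section
/- Let d ≥ 2 and M ≥ 1. For integers k ≥ 1, any a' ∈ ℤ, the sum S = (1/(dk)) Σ_{j=0}^{d-1} ((jk + a') mod dk) satisfies S ≥ (d-1)/2. Consequently, for a linear automorphism given in block form by a dM×dM matrix that cyclically permutes d blocks of size M (with the composite acting with k-th roots of unity eigenvalues), the age of the induced projectivized action is at least M(d-1)/2. -/
/-!
Write `a' = q k + r` with `0 ≤ r < k`. Then `(j k + a') mod dk = ((j + q) mod d) k + r`, and as `j`
runs over `0, …, d - 1` so does `(j + q) mod d`. Hence the sum equals `k d (d - 1)/2 + d r` exactly,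
i.e. `S = (d - 1)/2 + r/k ≥ (d - 1)/2`.
-/

open Finset

namespace Int

theorem mul_add_emod_mul_of_lt (m : ℤ) {d k r : ℤ} (hd : 0 < d) (hr : 0 ≤ r) (hrk : r < k) :
    (m * k + r) % (d * k) = m % d * k + r := by
  have hk : 0 < k := hr.trans_lt hrk
  have hm : 0 ≤ m % d := emod_nonneg m hd.ne'
  have hmd : m % d + 1 ≤ d := emod_lt_of_pos m hd
  have hsplit : m * k + r = (m % d * k + r) + m / d * (d * k) := by
    linear_combination (-k) * emod_add_mul_ediv m d
  rw [hsplit, add_mul_emod_self_right]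
  exact emod_eq_of_lt (by positivity) (by nlinarith)

theorem sum_Ico_emod_add {M : Type*} [AddCommMonoid M] (f : ℤ → M) {d : ℤ} (hd : 0 < d)
    (q : ℤ) : ∑ j ∈ Ico 0 d, f ((j + q) % d) = ∑ j ∈ Ico 0 d, f j := by
  have hmem : ∀ x, x % d ∈ Ico 0 d := fun x =>
    mem_Ico.mpr ⟨emod_nonneg x hd.ne', emod_lt_of_pos x hd⟩
  refine sum_nbij' (fun j => (j + q) % d) (fun j => (j - q) % d) (fun _ _ => hmem _)
    (fun _ _ => hmem _) (fun j hj => ?_) (fun j hj => ?_) (fun _ _ => rfl)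
  · obtain ⟨h0, hlt⟩ := mem_Ico.mp hj
    simpa [emod_sub_emod] using emod_eq_of_lt h0 hlt
  · obtain ⟨h0, hlt⟩ := mem_Ico.mp hj
    simpa [emod_add_emod] using emod_eq_of_lt h0 hlt

theorem two_mul_sum_Ico_zero (d : ℤ) (hd : 0 ≤ d) : 2 * ∑ j ∈ Ico 0 d, j = d * (d - 1) := by
  induction d, hd using Int.leInduction with
  | base => simp
  | succ n hn ih =>
    rw [← insert_Ico_right_eq_Ico_add_one hn, sum_insert (by simp), mul_add, ih]
    ring

theorem two_mul_sum_Ico_mul_add_emod {d k : ℤ} (hd : 0 < d) (hk : 0 < k) (a : ℤ) :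
    2 * ∑ j ∈ Ico 0 d, (j * k + a) % (d * k) = k * (d * (d - 1)) + 2 * d * (a % k) := by
  have hterm : ∀ j, (j * k + a) % (d * k) = (j + a / k) % d * k + a % k := fun j => by
    rw [← mul_add_emod_mul_of_lt _ hd (emod_nonneg a hk.ne') (emod_lt_of_pos a hk)]
    congr 1
    rw [add_mul, add_assoc, ediv_mul_add_emod]
  simp only [hterm, sum_add_distrib, ← sum_mul, sum_Ico_emod_add (fun j => j) hd, sum_const,
    Int.card_Ico, sub_zero, toNat_of_nonneg hd.le, nsmul_eq_mul]
  rw [mul_add, ← mul_assoc, two_mul_sum_Ico_zero d hd.le]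
  ring

end Int

/-- Let `d ≥ 2` and `M ≥ 1`. For integers `k ≥ 1` and any `a' ∈ ℤ`, the sum
`S = (1/(dk)) Σ_{j=0}^{d-1} ((jk + a') mod dk)` satisfies `S ≥ (d-1)/2`.  Consequently
(this is the age bound for a dM×dM block matrix cyclically permuting `d` blocks of size `M`,
each eigenvalue orbit contributing one such sum) the age bound `M·(d-1)/2 ≤ M·S` holds. -/
theorem stmt2 (d M k : ℤ) (hd : 2 ≤ d) (hM : 1 ≤ M) (hk : 1 ≤ k) (a' : ℤ) :
    ((d - 1 : ℚ)) / 2 ≤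
        (1 / ((d * k : ℤ) : ℚ)) *
          ∑ j ∈ Finset.Ico (0 : ℤ) d, (((j * k + a') % (d * k) : ℤ) : ℚ) ∧
      (M : ℚ) * (d - 1) / 2 ≤
        (M : ℚ) * ((1 / ((d * k : ℤ) : ℚ)) *
          ∑ j ∈ Finset.Ico (0 : ℤ) d, (((j * k + a') % (d * k) : ℤ) : ℚ)) := by
  have hd0 : (0 : ℚ) < d := by exact_mod_cast hd.trans_lt' two_pos
  have hk0 : (0 : ℚ) < k := by exact_mod_cast hk
  have hr : (0 : ℚ) ≤ (a' % k : ℤ) := by exact_mod_cast Int.emod_nonneg a' (by omega)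
  have hsum : 2 * ∑ j ∈ Ico (0 : ℤ) d, (((j * k + a') % (d * k) : ℤ) : ℚ) =
      k * (d * (d - 1)) + 2 * d * (a' % k : ℤ) := by
    exact_mod_cast congrArg (Int.cast (R := ℚ))
      (Int.two_mul_sum_Ico_mul_add_emod (by omega) (by omega) a')
  have hage : ((d - 1 : ℚ)) / 2 ≤
      (1 / ((d * k : ℤ) : ℚ)) * ∑ j ∈ Ico (0 : ℤ) d, (((j * k + a') % (d * k) : ℤ) : ℚ) := by
    rw [one_div_mul_eq_div, le_div_iff₀ (by push_cast; positivity)]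
    push_cast
    nlinarith [mul_nonneg hd0.le hr]
  refine ⟨hage, ?_⟩
  rw [mul_div_assoc]
  exact mul_le_mul_of_nonneg_left hage (by exact_mod_cast hM.trans' zero_le_one)
end

section
/- Let ℓ ≥ 1 and p ≥ 1 be integers with p dividing ℓ, set a = ℓ/p. Choose σ = ⌊ℓ/2⌋, and write σ = qa + r with 0 ≤ r < a. Then qσ + r(q+1) ≤ (ℓ/4)(p + 1/p), with equality exactly when ℓ is even and p is odd. -/
/-- Let `ℓ ≥ 1` and `p ≥ 1` with `p ∣ ℓ`, `a = ℓ/p`, `σ = ⌊ℓ/2⌋`, and write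
`σ = q·a + r` with `0 ≤ r < a` (so `q = σ/a`, `r = σ % a`).  Then
`q·σ + r·(q+1) ≤ (ℓ/4)(p + 1/p)`, with equality exactly when `ℓ` is even and `p` is odd. -/
theorem stmt10 (ℓ p : ℕ) (hℓ : 1 ≤ ℓ) (hp : 1 ≤ p) (hdvd : p ∣ ℓ) :
    let a := ℓ / p
    let σ := ℓ / 2
    let q := σ / a
    let r := σ % a
    ((q * σ + r * (q + 1) : ℕ) : ℚ) ≤ (ℓ : ℚ) / 4 * ((p : ℚ) + 1 / (p : ℚ)) ∧
      (((q * σ + r * (q + 1) : ℕ) : ℚ) = (ℓ : ℚ) / 4 * ((p : ℚ) + 1 / (p : ℚ)) ↔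
        Even ℓ ∧ Odd p) := by
  intro a σ q r
  obtain ⟨c, hc⟩ := hdvd
  have hc1 : 1 ≤ c := by
    rcases Nat.eq_zero_or_pos c with h | h
    · subst h; simp at hc; omega
    · exact h
  have ha : a = c := by
    show ℓ / p = c
    rw [hc, Nat.mul_div_cancel_left _ (by omega : 0 < p)]
  have hσ0 : σ = ℓ / 2 := rfl
  have hq0 : q = σ / a := rfl
  have hr0 : r = σ % a := rfl
  rcases Nat.even_or_odd p with hpe | hpo
  · -- p even: strict inequality
    obtain ⟨m, hm⟩ := hpe
    have hm1 : 1 ≤ m := by omega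
    have hl' : ℓ = 2 * (m * c) := by rw [hc, hm]; ring
    have hσ : σ = m * c := by rw [hσ0]; omega
    have hq : q = m := by
      rw [hq0, hσ, ha, Nat.mul_div_cancel _ (by omega : 0 < c)]
    have hr : r = 0 := by
      rw [hr0, hσ, ha, Nat.mul_mod_left]
    rw [hq, hr, hσ]
    have hM : (1:ℚ) ≤ (m:ℚ) := by exact_mod_cast hm1
    have hC : (1:ℚ) ≤ (c:ℚ) := by exact_mod_cast hc1
    have hlQ : (ℓ:ℚ) = 2 * ((m:ℚ) * c) := by exact_mod_cast hl'
    have hpQ : (p:ℚ) = 2 * (m:ℚ) := by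
      have : p = 2 * m := by omega
      exact_mod_cast this
    have key : (ℓ:ℚ) / 4 * ((p:ℚ) + 1 / (p:ℚ))
        = (m:ℚ) * ((m:ℚ) * (c:ℚ)) + (c:ℚ) / 4 := by
      rw [hlQ, hpQ]
      have hm0 : (m:ℚ) ≠ 0 := by linarith
      field_simp
      ring
    push_cast
    constructor
    · linarith
    · constructor
      · intro heq; exfalso; linarith
      · rintro ⟨_, ht⟩
        exfalso
        rcases ht with ⟨t, ht⟩
        omega
  · obtain ⟨k, hk⟩ := hpo
    have hpQ : (p:ℚ) = 2 * (k:ℚ) + 1 := by exact_mod_cast hk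
    have hp0 : (2 * (k:ℚ) + 1) ≠ 0 := by positivity
    rcases Nat.even_or_odd c with hce | hco
    · -- p odd, c even: equality
      obtain ⟨b, hb⟩ := hce
      have hb1 : 1 ≤ b := by omega
      have hl : ℓ = 4 * (k * b) + 2 * b := by rw [hc, hk, hb]; ring
      have hσ : σ = 2 * (k * b) + b := by rw [hσ0]; omega
      have hσ' : σ = b + (b + b) * k := by rw [hσ]; ring
      have hq : q = k := by
        rw [hq0, ha, hb, hσ', Nat.add_mul_div_left _ _ (by omega : 0 < b + b),
          Nat.div_eq_of_lt (by omega)]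
        omega
      have hr : r = b := by
        rw [hr0, ha, hb, hσ', Nat.add_mul_mod_self_left, Nat.mod_eq_of_lt (by omega)]
      rw [hq, hr, hσ]
      have hlQ : (ℓ:ℚ) = 4 * ((k:ℚ) * (b:ℚ)) + 2 * (b:ℚ) := by exact_mod_cast hl
      have key : (ℓ:ℚ) / 4 * ((p:ℚ) + 1 / (p:ℚ))
          = (k:ℚ) * (2 * ((k:ℚ) * (b:ℚ)) + (b:ℚ)) + (b:ℚ) * ((k:ℚ) + 1) := by
        rw [hlQ, hpQ]
        field_simp
        ring
      push_cast
      constructor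
      · linarith
      · constructor
        · intro _
          exact ⟨⟨2 * (k * b) + b, by omega⟩, ⟨k, hk⟩⟩
        · intro _
          linarith
    · -- p odd, c odd: strict inequality, ℓ odd
      obtain ⟨b, hb⟩ := hco
      have hl : ℓ = 4 * (k * b) + 2 * k + 2 * b + 1 := by rw [hc, hk, hb]; ring
      have hσ : σ = 2 * (k * b) + k + b := by rw [hσ0]; omega
      have hσ' : σ = b + (2 * b + 1) * k := by rw [hσ]; ring
      have hq : q = k := by
        rw [hq0, ha, hb, hσ', Nat.add_mul_div_left _ _ (by omega : 0 < 2 * b + 1),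
          Nat.div_eq_of_lt (by omega)]
        omega
      have hr : r = b := by
        rw [hr0, ha, hb, hσ', Nat.add_mul_mod_self_left, Nat.mod_eq_of_lt (by omega)]
      rw [hq, hr, hσ]
      have hlQ : (ℓ:ℚ) = 4 * ((k:ℚ) * (b:ℚ)) + 2 * (k:ℚ) + 2 * (b:ℚ) + 1 := by
        exact_mod_cast hl
      have key : (ℓ:ℚ) / 4 * ((p:ℚ) + 1 / (p:ℚ))
          = (k:ℚ) * (2 * ((k:ℚ) * (b:ℚ)) + (k:ℚ) + (b:ℚ)) + (b:ℚ) * ((k:ℚ) + 1) + ((k:ℚ) + 1 / 2) := by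
        rw [hlQ, hpQ]
        field_simp
        ring
      push_cast
      constructor
      · linarith
      · constructor
        · intro heq; exfalso; linarith
        · rintro ⟨⟨t, ht⟩, _⟩
          exfalso
          omega
end

section
/- For n ≥ 2 and q with gcd(q,n)=1, 0 < q < n: the cyclic quotient singularity ℂ²/⟨τ⟩ of type (1/n)(1,q) (τ acting by (ζ_n x, ζ_n^q y)) arising from the cherry graph with enhancements a ≤ b on short and long edges has n = b/gcd(a,b) and q = (b-a)/gcd(a,b). Equivalently: with N' = ⟨(ℓ₁,0),(0,ℓ₂)⟩ where ℓ₁ = lcm(a,b), ℓ₂ = b, and N = ⟨(a,-a),(0,ℓ₂)⟩ ⊂ ℚ², the index [N : N'] equals ℓ₁/a = b/gcd(a,b). -/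
/-! The shear `(x, y) ↦ (x, y - x)` carries the rectangular lattice `aℤ × bℤ` onto `N`, and it
fixes `N' = ℓ₁ℤ × bℤ` because `b ∣ ℓ₁`. So `[N : N'] = [aℤ × bℤ : ℓ₁ℤ × bℤ] = [aℤ : ℓ₁ℤ] = ℓ₁/a`. -/

namespace AddSubgroup

section Prod

variable {G H : Type*} [AddGroup G] [AddGroup H]

theorem relIndex_prod (H₁ K₁ : AddSubgroup G) (H₂ K₂ : AddSubgroup H) :
    (H₁.prod H₂).relIndex (K₁.prod K₂) = H₁.relIndex K₁ * H₂.relIndex K₂ := by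
  have h : (H₁.prod H₂).addSubgroupOf (K₁.prod K₂) =
      ((H₁.addSubgroupOf K₁).prod (H₂.addSubgroupOf K₂)).comap
        (K₁.prodEquiv K₂).toAddMonoidHom := rfl
  rw [relIndex, h, index_comap_of_surjective _ (K₁.prodEquiv K₂).surjective, index_prod]
  rfl

end Prod

variable {G : Type*} [AddCommGroup G]

theorem closure_pair_eq_prod_zmultiples {H : Type*} [AddCommGroup H] (x : G) (y : H) :
    closure {(x, 0), (0, y)} = (zmultiples x).prod (zmultiples y) := by
  apply le_antisymm
  · rw [closure_le]
    rintro _ (rfl | rfl)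
    exacts [⟨mem_zmultiples x, zero_mem _⟩, ⟨zero_mem _, mem_zmultiples y⟩]
  · rintro ⟨_, _⟩ ⟨⟨m, rfl⟩, ⟨n, rfl⟩⟩
    have hsum : (m • x, n • y) = m • (x, (0 : H)) + n • ((0 : G), y) := by simp
    rw [hsum]
    exact add_mem (zsmul_mem (subset_closure (by simp)) m)
      (zsmul_mem (subset_closure (by simp)) n)

theorem relIndex_zmultiples_nsmul {x : G} (hx : ¬IsOfFinAddOrder x) (k : ℕ) :
    (zmultiples (k • x)).relIndex (zmultiples x) = k := by
  have hinj : Function.Injective (zmultiplesHom G x) :=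
    injective_zsmul_iff_not_isOfFinAddOrder.mpr hx
  have hk : (zmultiples (k : ℤ)).map (zmultiplesHom G x) = zmultiples (k • x) := by
    rw [AddMonoidHom.map_zmultiples, zmultiplesHom_apply, natCast_zsmul]
  rw [← hk, ← range_zmultiplesHom x, (zmultiplesHom G x).range_eq_map,
    relIndex_map_map_of_injective _ _ hinj, relIndex_top_right, Int.index_zmultiples,
    Int.natAbs_natCast]

theorem zmultiples_natCast_le_of_dvd {R : Type*} [Ring R] {m n : ℕ} (h : n ∣ m) :
    zmultiples (m : R) ≤ zmultiples (n : R) := by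
  obtain ⟨c, rfl⟩ := h
  refine zmultiples_le_of_mem ⟨c, ?_⟩
  dsimp only
  rw [natCast_zsmul, nsmul_eq_mul, Nat.cast_mul, Nat.cast_comm]

end AddSubgroup

open AddSubgroup

section Shear

variable (G : Type*) [AddCommGroup G]

def shear : G × G →+ G × G :=
  (AddMonoidHom.fst G G).prod (AddMonoidHom.snd G G - AddMonoidHom.fst G G)

variable {G}

@[simp]
theorem shear_apply (p : G × G) : shear G p = (p.1, p.2 - p.1) := rfl

theorem shear_injective : Function.Injective (shear G) := by
  rintro ⟨x, y⟩ ⟨x', y'⟩ h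
  simp only [shear_apply, Prod.mk.injEq] at h
  obtain ⟨rfl, h⟩ := h
  simpa using h

theorem map_shear_prod_of_le {H K : AddSubgroup G} (hHK : H ≤ K) :
    (H.prod K).map (shear G) = H.prod K := by
  ext ⟨x, y⟩
  constructor
  · rintro ⟨⟨u, v⟩, ⟨hu, hv⟩, h⟩
    simp only [shear_apply, Prod.mk.injEq] at h
    obtain ⟨rfl, rfl⟩ := h
    exact ⟨hu, K.sub_mem hv (hHK hu)⟩
  · rintro ⟨hx, hy⟩
    exact ⟨(x, y + x), ⟨hx, K.add_mem hy (hHK hx)⟩, by simp⟩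

theorem map_shear_closure_pair (x y : G) :
    (closure {(x, 0), (0, y)}).map (shear G) = closure {(x, -x), (0, y)} := by
  rw [AddMonoidHom.map_closure, Set.image_pair]
  simp

end Shear

theorem Nat.lcm_div_left {a : ℕ} (b : ℕ) (ha : 0 < a) : Nat.lcm a b / a = b / Nat.gcd a b := by
  rw [Nat.lcm, Nat.mul_div_assoc a (Nat.gcd_dvd_right a b), Nat.mul_div_cancel_left _ ha]

theorem stmt16_general (a b : ℕ) (ha : 1 ≤ a) :
    let N' : AddSubgroup (ℚ × ℚ) :=
      AddSubgroup.closure {((Nat.lcm a b : ℚ), (0 : ℚ)), ((0 : ℚ), (b : ℚ))}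
    let N : AddSubgroup (ℚ × ℚ) :=
      AddSubgroup.closure {((a : ℚ), -(a : ℚ)), ((0 : ℚ), (b : ℚ))}
    N' ≤ N ∧ N'.relIndex N = Nat.lcm a b / a ∧ Nat.lcm a b / a = b / Nat.gcd a b := by
  intro N' N
  have hlcm : (Nat.lcm a b : ℚ) = (Nat.lcm a b / a) • (a : ℚ) := by
    rw [nsmul_eq_mul, ← Nat.cast_mul, Nat.div_mul_cancel (Nat.dvd_lcm_left a b)]
  have hN' : N' = (zmultiples (Nat.lcm a b : ℚ)).prod (zmultiples (b : ℚ)) :=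
    closure_pair_eq_prod_zmultiples _ _
  have hN'_shear : N'.map (shear ℚ) = N' :=
    hN' ▸ map_shear_prod_of_le (zmultiples_natCast_le_of_dvd (Nat.dvd_lcm_right a b))
  have hN : N = ((zmultiples (a : ℚ)).prod (zmultiples (b : ℚ))).map (shear ℚ) := by
    rw [← closure_pair_eq_prod_zmultiples, map_shear_closure_pair]
  have hle : zmultiples (Nat.lcm a b : ℚ) ≤ zmultiples (a : ℚ) :=
    zmultiples_natCast_le_of_dvd (Nat.dvd_lcm_left a b)
  have ha_inf : ¬IsOfFinAddOrder (a : ℚ) :=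
    not_isOfFinAddOrder_of_isAddTorsionFree (by positivity)
  refine ⟨?_, ?_, Nat.lcm_div_left b ha⟩
  · rw [← hN'_shear, hN, hN']
    exact map_mono (prod_mono hle le_rfl)
  · rw [← hN'_shear, hN, relIndex_map_map_of_injective _ _ shear_injective, hN',
      relIndex_prod, relIndex_self, mul_one, hlcm, relIndex_zmultiples_nsmul ha_inf]

/-- For the cherry graph with enhancements `a ≤ b` (`a, b ≥ 1`) on the short
and long edges, the simple twist group lattice is `N' = ⟨(ℓ₁, 0), (0, ℓ₂)⟩ ⊂ ℚ²` with
`ℓ₁ = lcm(a,b)`, `ℓ₂ = b`, the twist group lattice is `N = ⟨(a, -a), (0, ℓ₂)⟩ ⊂ ℚ²`, and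
the index satisfies `[N : N'] = ℓ₁/a = b/gcd(a,b)` (so the resulting cyclic quotient
singularity of type `(1/n)(1,q)` has `n = b/gcd(a,b)`). -/
theorem stmt16 (a b : ℕ) (ha : 1 ≤ a) (hab : a ≤ b) :
    let N' : AddSubgroup (ℚ × ℚ) :=
      AddSubgroup.closure {((Nat.lcm a b : ℚ), (0 : ℚ)), ((0 : ℚ), (b : ℚ))}
    let N : AddSubgroup (ℚ × ℚ) :=
      AddSubgroup.closure {((a : ℚ), -(a : ℚ)), ((0 : ℚ), (b : ℚ))}
    N' ≤ N ∧ N'.relIndex N = Nat.lcm a b / a ∧ Nat.lcm a b / a = b / Nat.gcd a b :=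
  stmt16_general a b ha
end

section
/- For a two-level graph Γ with edges E, prongs p_e ≥ 1, ℓ = lcm_{e}(p_e), define P = Σ_e p_e and P_{-1} = Σ_e 1/p_e. Suppose for each bottom-level vertex Y_j with adjacent edge set E_j the twisting coefficient is σ = ⌊ℓ/2⌋ and the bridge coefficients are chosen optimally as above. Then the twisting correction satisfies Δ ≥ ⌊ℓ/2⌋ Σ_j (α_{Y_j} - m_{Y_j}/2) + (ℓ/8)(P - P_{-1}), where α_{Y_j} and m_{Y_j} are the sums of the α_i and m_i over marked points on Y_j, and Δ = -½ Σ_j Σ_{e∈E_j} Σ_{k=1}^{a_e}(s_{e,k}-s_{e,k-1})² + ½ Σ_j σ_j(2α_{Y_j} - m_{Y_j} + p_{Y_j}) with a_e = ℓ/p_e, p_{Y_j} = Σ_{e∈E_j} p_e. -/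
/-!
Write `a = ℓ / p`, `σ = ⌊ℓ/2⌋ = q a + r` with `0 ≤ r < a`. Then
`4a (q σ + r (q + 1)) = 4σ² + a² - (a - 2r)²`, while `4a` times the claimed per-edge bound is
`4σℓ - ℓ² + a²`. So the per-edge inequality is `(2σ - ℓ)² ≤ (a - 2r)²`: for even `ℓ` the left side
vanishes, and for odd `ℓ` it is `1` while `a` is odd, so `a - 2r` is a nonzero integer.
Summing over the edges and regrouping the sums over bottom vertices gives the theorem.
-/

open Finset

/-- The least value of `∑ k < a, (s (k+1) - s k)²` over integer sequences with `s 0 = 0` and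
`s a = σ`: writing `σ = q a + r`, take `r` steps of size `q + 1` and `a - r` steps of size `q`. -/
def bridgeCost (σ a : ℕ) : ℕ := σ / a * σ + σ % a * (σ / a + 1)

lemma four_mul_bridgeCost {R : Type*} [CommRing R] (σ a : ℕ) :
    4 * (a : R) * bridgeCost σ a = 4 * (σ : R) ^ 2 + (a : R) ^ 2 - (a - 2 * (σ % a : ℕ)) ^ 2 := by
  have hσ : (σ : R) = a * (σ / a : ℕ) + (σ % a : ℕ) := by
    rw [← Nat.cast_mul, ← Nat.cast_add, Nat.div_add_mod]
  rw [bridgeCost]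
  push_cast
  linear_combination (-4 * (σ : R) - 4 * (σ % a : ℕ)) * hσ

lemma sq_two_mul_div_two_sub_le_sq_sub {a ℓ : ℕ} (h : a ∣ ℓ) (r : ℤ) :
    (2 * (ℓ / 2 : ℕ) - (ℓ : ℤ)) ^ 2 ≤ ((a : ℤ) - 2 * r) ^ 2 := by
  rcases Nat.even_or_odd ℓ with hℓ | hℓ
  · have : 2 * (ℓ / 2 : ℕ) - (ℓ : ℤ) = 0 := by
      have := Nat.two_mul_div_two_of_even hℓ; omega
    rw [this]
    positivity
  · have hsq : (2 * (ℓ / 2 : ℕ) - (ℓ : ℤ)) ^ 2 = 1 := by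
      have := Nat.two_mul_div_two_add_one_of_odd hℓ
      have : 2 * (ℓ / 2 : ℕ) - (ℓ : ℤ) = -1 := by omega
      rw [this]; norm_num
    have ha : Odd (a : ℤ) := by exact_mod_cast hℓ.of_dvd_nat h
    have hne : (a : ℤ) - 2 * r ≠ 0 := fun h0 => by
      rw [sub_eq_zero] at h0
      exact Int.not_even_iff_odd.mpr ha (h0 ▸ even_two_mul r)
    rw [hsq]
    nlinarith [Int.one_le_abs hne, sq_abs ((a : ℤ) - 2 * r)]

lemma bridgeCost_le {p ℓ : ℕ} (hd : p ∣ ℓ) :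
    (bridgeCost (ℓ / 2) (ℓ / p) : ℚ)
      ≤ ((ℓ / 2 : ℕ) : ℚ) * p - (ℓ : ℚ) / 4 * ((p : ℚ) - 1 / (p : ℚ)) := by
  rcases Nat.eq_zero_or_pos ℓ with rfl | hℓ
  · simp [bridgeCost]
  obtain ⟨a, rfl⟩ := hd
  have hp : 0 < p := Nat.pos_of_mul_pos_right hℓ
  have ha : 0 < a := Nat.pos_of_mul_pos_left hℓ
  rw [Nat.mul_div_cancel_left a hp]
  set σ := p * a / 2
  have hpar : (2 * (σ : ℚ) - (p * a : ℕ)) ^ 2 ≤ ((a : ℚ) - 2 * (σ % a : ℕ)) ^ 2 := by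
    exact_mod_cast sq_two_mul_div_two_sub_le_sq_sub (dvd_mul_left a p) (σ % a : ℕ)
  rw [← mul_le_mul_iff_right₀ (show (0 : ℚ) < 4 * a by positivity)]
  push_cast at hpar
  calc 4 * (a : ℚ) * bridgeCost σ a
      = 4 * (σ : ℚ) ^ 2 + a ^ 2 - (a - 2 * (σ % a : ℕ)) ^ 2 := four_mul_bridgeCost σ a
    _ ≤ 4 * (σ : ℚ) ^ 2 + a ^ 2 - (2 * σ - p * a) ^ 2 := by linarith
    _ = 4 * a * (σ * p - (p * a : ℕ) / 4 * (p - 1 / p)) := by push_cast; field_simp; ring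

theorem stmt17_general (Vb E Z : Type) [Fintype Vb] [Fintype E] [Fintype Z] [DecidableEq Vb]
    (owner : E → Vb) (vtx : Z → Vb) (p : E → ℕ)
    (ℓ : ℕ) (hℓ : ℓ = Finset.univ.lcm p)
    (αw mw : Z → ℚ) (s : E → ℕ → ℤ)
    (hopt : ∀ e, ∑ k ∈ Finset.range (ℓ / p e), (s e (k + 1) - s e k) ^ 2
      = (((ℓ / 2) / (ℓ / p e) * (ℓ / 2)
          + (ℓ / 2) % (ℓ / p e) * ((ℓ / 2) / (ℓ / p e) + 1) : ℕ) : ℤ)) :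
    let αY : Vb → ℚ := fun j => ∑ z ∈ Finset.univ.filter (fun z => vtx z = j), αw z
    let mY : Vb → ℚ := fun j => ∑ z ∈ Finset.univ.filter (fun z => vtx z = j), mw z
    let pY : Vb → ℚ := fun j => ∑ e ∈ Finset.univ.filter (fun e => owner e = j), (p e : ℚ)
    let Δ : ℚ :=
      -(1 / 2) * ∑ j : Vb, ∑ e ∈ Finset.univ.filter (fun e => owner e = j),
          ∑ k ∈ Finset.range (ℓ / p e), ((s e (k + 1) - s e k : ℤ) : ℚ) ^ 2
        + (1 / 2) * ∑ j : Vb, ((ℓ / 2 : ℕ) : ℚ) * (2 * αY j - mY j + pY j)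
    ((ℓ / 2 : ℕ) : ℚ) * (∑ j : Vb, (αY j - mY j / 2))
        + (ℓ : ℚ) / 8 * ((∑ e : E, (p e : ℚ)) - ∑ e : E, 1 / (p e : ℚ)) ≤ Δ := by
  set σ : ℚ := ((ℓ / 2 : ℕ) : ℚ)
  intro αY mY pY Δ
  have hedge : ∀ e, ∑ k ∈ range (ℓ / p e), ((s e (k + 1) - s e k : ℤ) : ℚ) ^ 2
      ≤ σ * p e - (ℓ : ℚ) / 4 * ((p e : ℚ) - 1 / (p e : ℚ)) := fun e => by
    have hcost : ∑ k ∈ range (ℓ / p e), ((s e (k + 1) - s e k : ℤ) : ℚ) ^ 2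
        = bridgeCost (ℓ / 2) (ℓ / p e) := by exact_mod_cast hopt e
    exact hcost ▸ bridgeCost_le (hℓ ▸ dvd_lcm (mem_univ e))
  have hΔ : Δ = -(1 / 2) * ∑ e, ∑ k ∈ range (ℓ / p e), ((s e (k + 1) - s e k : ℤ) : ℚ) ^ 2
      + σ * ∑ j, (αY j - mY j / 2) + σ / 2 * ∑ e, (p e : ℚ) := by
    have hpY : ∑ j, pY j = ∑ e, (p e : ℚ) := sum_fiberwise _ _ _
    have hvertex : ∑ j, σ * (2 * αY j - mY j + pY j)
        = 2 * σ * ∑ j, (αY j - mY j / 2) + σ * ∑ j, pY j := by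
      rw [mul_sum, mul_sum, ← sum_add_distrib]
      exact sum_congr rfl fun j _ => by ring
    simp only [Δ]
    rw [sum_fiberwise, hvertex, hpY]
    ring
  have hsum := sum_le_sum fun e (_ : e ∈ univ) => hedge e
  simp only [sum_sub_distrib, ← mul_sum] at hsum
  linarith

/-- Let `Γ` be a two-level graph with bottom-level vertices `Vb`, edges `E`
(each edge `e` attached to the bottom vertex `owner e`), prongs `p e ≥ 1`,
`ℓ = lcm_e p_e`, `P = Σ_e p_e` and `P_{-1} = Σ_e 1/p_e`, and marked points `Z` on the bottom
level (point `z` lying on the vertex `vtx z`, with weights `αw z` and orders `mw z`, so that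
`α_{Y_j}` and `m_{Y_j}` are the corresponding sums over the points of `Y_j`).  Suppose for
each bottom vertex the twisting coefficient is `σ = ⌊ℓ/2⌋`, and the bridge coefficients
`s_{e,k}` (`k = 0, …, a_e = ℓ/p_e`, `s_{e,0} = 0`, `s_{e,a_e} = σ`) are chosen optimally,
i.e. achieving the minimal value `q_e σ + r_e (q_e + 1)` of `Σ_k (s_{e,k}-s_{e,k-1})²` where
`σ = q_e a_e + r_e`, `0 ≤ r_e < a_e`.  Then the twisting correction
`Δ = -½ Σ_j Σ_{e ∈ E_j} Σ_{k=1}^{a_e} (s_{e,k}-s_{e,k-1})²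
     + ½ Σ_j σ (2α_{Y_j} - m_{Y_j} + p_{Y_j})`
satisfies `Δ ≥ ⌊ℓ/2⌋ Σ_j (α_{Y_j} - m_{Y_j}/2) + (ℓ/8)(P - P_{-1})`. -/
theorem stmt17 (Vb E Z : Type) [Fintype Vb] [Fintype E] [Fintype Z] [DecidableEq Vb]
    (owner : E → Vb) (vtx : Z → Vb) (p : E → ℕ) (hp : ∀ e, 1 ≤ p e)
    (ℓ : ℕ) (hℓ : ℓ = Finset.univ.lcm p)
    (αw mw : Z → ℚ) (s : E → ℕ → ℤ)
    (hs0 : ∀ e, s e 0 = 0) (hsend : ∀ e, s e (ℓ / p e) = ((ℓ / 2 : ℕ) : ℤ))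
    (hopt : ∀ e, ∑ k ∈ Finset.range (ℓ / p e), (s e (k + 1) - s e k) ^ 2
      = (((ℓ / 2) / (ℓ / p e) * (ℓ / 2)
          + (ℓ / 2) % (ℓ / p e) * ((ℓ / 2) / (ℓ / p e) + 1) : ℕ) : ℤ)) :
    let αY : Vb → ℚ := fun j => ∑ z ∈ Finset.univ.filter (fun z => vtx z = j), αw z
    let mY : Vb → ℚ := fun j => ∑ z ∈ Finset.univ.filter (fun z => vtx z = j), mw z
    let pY : Vb → ℚ := fun j => ∑ e ∈ Finset.univ.filter (fun e => owner e = j), (p e : ℚ)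
    let Δ : ℚ :=
      -(1 / 2) * ∑ j : Vb, ∑ e ∈ Finset.univ.filter (fun e => owner e = j),
          ∑ k ∈ Finset.range (ℓ / p e), ((s e (k + 1) - s e k : ℤ) : ℚ) ^ 2
        + (1 / 2) * ∑ j : Vb, ((ℓ / 2 : ℕ) : ℚ) * (2 * αY j - mY j + pY j)
    ((ℓ / 2 : ℕ) : ℚ) * (∑ j : Vb, (αY j - mY j / 2))
        + (ℓ : ℚ) / 8 * ((∑ e : E, (p e : ℚ)) - ∑ e : E, 1 / (p e : ℚ)) ≤ Δ :=
  stmt17_general Vb E Z owner vtx p ℓ hℓ αw mw s hopt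
end
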